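/- Let J ⊆ ∘I be nonempty and let B be a real convex set in Δ_{J+}. Set B̄ = {β̄ | β ∈ B} and P_B = {ε ∈ ∘Δ_J | ⟨ε⟩∖B is finite}. Then both B̄ and P_B are pointed closed subsets of ∘Δ_J with P_B ⊆ B̄. Moreover, if B is a real biconvex set in Δ_{J+}, then P_B is a pointed biclosed set in ∘Δ_J. -/

import Mathlib

open scoped Pointwise

section

variable {ι V : Type*} [Fintype ι] [Nonempty ι] [AddCommGroup V] [Module ℝ V]

/-- The length of `w` with respect to a generating set `S` of a group. -/
noncomputable def lenG {G : Type*} [Group G] (S : Set G) (w : G) : ℕ :=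
  sInf {n | ∃ l : List G, (∀ x ∈ l, x ∈ S) ∧ l.length = n ∧ l.prod = w}

/-- `v` is a nonnegative linear combination of the simple roots `α` of `∘Δ`. -/
def PosoComb (α : ι → V) (v : V) : Prop :=
  ∃ c : ι → ℝ, (∀ i, 0 ≤ c i) ∧ v = ∑ i, c i • α i

/-- The parabolic subgroup `∘W_J = ⟨s_j | j ∈ J⟩` of the finite Weyl group, realized
inside the group of linear automorphisms of `𝔥* = V`. -/
def WoJ (α : ι → V) (s : V → V ≃ₗ[ℝ] V) (J : Set ι) : Subgroup (V ≃ₗ[ℝ] V) :=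
  Subgroup.closure ((fun j => s (α j)) '' J)

/-- `∘Δ_J = ∘W_J(∘Π_J)` (so `∘Δ_∅ = ∅`). -/
def DeloJ (α : ι → V) (s : V → V ≃ₗ[ℝ] V) (J : Set ι) : Set V :=
  {v | ∃ g ∈ WoJ α s J, ∃ j ∈ J, v = g (α j)}

/-- `∘Δ`, the root system of the underlying finite-dimensional simple Lie algebra. -/
def Delo (α : ι → V) (s : V → V ≃ₗ[ℝ] V) : Set V := DeloJ α s Set.univ

/-- `∘Δ^K_{J+} = (∘Δ_J ∖ ∘Δ_K) ∩ ∘Δ₊`. -/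
def DeloKJpos (α : ι → V) (s : V → V ≃ₗ[ℝ] V) (J K : Set ι) : Set V :=
  (DeloJ α s J \ DeloJ α s K) ∩ {v | PosoComb α v}

/-- `∘Δ^K_{J−} = (∘Δ_J ∖ ∘Δ_K) ∩ ∘Δ₋`. -/
def DeloKJneg (α : ι → V) (s : V → V ≃ₗ[ℝ] V) (J K : Set ι) : Set V :=
  (DeloJ α s J \ DeloJ α s K) ∩ {v | PosoComb α (-v)}

/-- The set `∘W^K_J` of minimal-length representatives of the right cosets `∘W_J/∘W_K`. -/
def MinReps (α : ι → V) (s : V → V ≃ₗ[ℝ] V) (J K : Set ι) : Set (V ≃ₗ[ℝ] V) :=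
  {w | w ∈ WoJ α s J ∧ ∀ v ∈ WoJ α s K,
    lenG (Set.range fun i => s (α i)) w ≤ lenG (Set.range fun i => s (α i)) (w * v)}

/-- The affine simple roots `Π = {α₀ = δ − θ} ∪ ∘Π`, indexed by `Option ι`. -/
def alHat (α : ι → V) (δ θ : V) : Option ι → V := fun o => o.elim (δ - θ) α

/-- `v` is a nonnegative linear combination of the affine simple roots. -/
def PosComb (α : ι → V) (δ θ : V) (v : V) : Prop :=
  ∃ c : Option ι → ℝ, (∀ o, 0 ≤ c o) ∧ v = ∑ o, c o • alHat α δ θ o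

/-- The real roots `Δ^re = {mδ + ε | m ∈ ℤ, ε ∈ ∘Δ}`. -/
def DelRe (α : ι → V) (δ : V) (s : V → V ≃ₗ[ℝ] V) : Set V :=
  {v | ∃ m : ℤ, ∃ ε ∈ Delo α s, v = m • δ + ε}

/-- The imaginary roots `Δ^im = {mδ | m ∈ ℤ ∖ {0}}`. -/
def DelIm (δ : V) : Set V := {v | ∃ m : ℤ, m ≠ 0 ∧ v = m • δ}

/-- The affine root system `Δ = Δ^re ∪ Δ^im`. -/
def Del (α : ι → V) (δ : V) (s : V → V ≃ₗ[ℝ] V) : Set V := DelRe α δ s ∪ DelIm δ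

/-- The positive roots `Δ₊` (relative to `Π`). -/
def DelPos (α : ι → V) (δ θ : V) (s : V → V ≃ₗ[ℝ] V) : Set V :=
  {v ∈ Del α δ s | PosComb α δ θ v}

/-- The negative roots `Δ₋ = −Δ₊`. -/
def DelNeg (α : ι → V) (δ θ : V) (s : V → V ≃ₗ[ℝ] V) : Set V :=
  {v | -v ∈ DelPos α δ θ s}

/-- `Δ^re₊ = Δ^re ∩ Δ₊`. -/
def DelRePos (α : ι → V) (δ θ : V) (s : V → V ≃ₗ[ℝ] V) : Set V :=
  DelRe α δ s ∩ DelPos α δ θ s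

/-- `Δ^im₊ = {mδ | m ≥ 1}`. -/
def DelImPos (δ : V) : Set V := {v | ∃ m : ℕ, 0 < m ∧ v = (m : ℤ) • δ}

/-- `⟨ε⟩ = {mδ + ε | m ∈ ℤ≥0} ∩ Δ^re₊`. -/
def brkt (α : ι → V) (δ θ : V) (s : V → V ≃ₗ[ℝ] V) (ε : V) : Set V :=
  {v | ∃ m : ℕ, v = (m : ℤ) • δ + ε} ∩ DelRePos α δ θ s

/-- `⟨P⟩ = ⋃_{ε ∈ P} ⟨ε⟩`. -/
def brSet (α : ι → V) (δ θ : V) (s : V → V ≃ₗ[ℝ] V) (P : Set V) : Set V :=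
  ⋃ ε ∈ P, brkt α δ θ s ε

/-- `Δ^re_J = {mδ + ε | m ∈ ℤ, ε ∈ ∘Δ_J}`. -/
def DelReJ (α : ι → V) (δ : V) (s : V → V ≃ₗ[ℝ] V) (J : Set ι) : Set V :=
  {v | ∃ m : ℤ, ∃ ε ∈ DeloJ α s J, v = m • δ + ε}

/-- `Δ_J = Δ^re_J ∪ Δ^im`. -/
def DelJ (α : ι → V) (δ : V) (s : V → V ≃ₗ[ℝ] V) (J : Set ι) : Set V :=
  DelReJ α δ s J ∪ DelIm δ

/-- `Δ_{J+} = Δ_J ∩ Δ₊`. -/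
def DelJPos (α : ι → V) (δ θ : V) (s : V → V ≃ₗ[ℝ] V) (J : Set ι) : Set V :=
  DelJ α δ s J ∩ DelPos α δ θ s

/-- `Δ_{J+} = ⟨∘Δ_J⟩ ∪ Δ^im₊` (the description used from Section 5 onwards). -/
def DelJPosB (α : ι → V) (δ θ : V) (s : V → V ≃ₗ[ℝ] V) (J : Set ι) : Set V :=
  brSet α δ θ s (DeloJ α s J) ∪ DelImPos δ

/-- The set of highest roots of the irreducible components of `∘Δ_J`, i.e. the maximal
elements of `∘Δ_{J+}`: the positive roots `ε` of `∘Δ_J` such that no `ε + α_j` is a root. -/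
def HighRoots (α : ι → V) (s : V → V ≃ₗ[ℝ] V) (J : Set ι) : Set V :=
  {ε ∈ DeloJ α s J | PosoComb α ε ∧ ∀ j ∈ J, ε + α j ∉ DeloJ α s J}

/-- `Π_J = ∘Π_J ⊔ {δ − θ_{J_c} | c}`. -/
def PiJ (α : ι → V) (δ : V) (s : V → V ≃ₗ[ℝ] V) (J : Set ι) : Set V :=
  (α '' J) ∪ (fun x => δ - x) '' HighRoots α s J

/-- `S_J = {s_α | α ∈ Π_J}`. -/
def SJ (α : ι → V) (δ : V) (s : V → V ≃ₗ[ℝ] V) (J : Set ι) : Set (V ≃ₗ[ℝ] V) :=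
  s '' PiJ α δ s J

/-- `W_J = ⟨S_J⟩` (so `W_∅ = {1}`). -/
def WJ (α : ι → V) (δ : V) (s : V → V ≃ₗ[ℝ] V) (J : Set ι) : Subgroup (V ≃ₗ[ℝ] V) :=
  Subgroup.closure (SJ α δ s J)

/-- `Φ_J(y) = {β ∈ Δ_{J+} | y⁻¹(β) < 0}`, with `Δ_{J+} = Δ_J ∩ Δ₊`. -/
def PhiJ (α : ι → V) (δ θ : V) (s : V → V ≃ₗ[ℝ] V) (J : Set ι) (y : V ≃ₗ[ℝ] V) : Set V :=
  {β ∈ DelJPos α δ θ s J | y⁻¹ β ∈ DelNeg α δ θ s}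

/-- `Φ_J(y) = {β ∈ Δ_{J+} | y⁻¹(β) < 0}`, with `Δ_{J+} = ⟨∘Δ_J⟩ ∪ Δ^im₊`. -/
def PhiJb (α : ι → V) (δ θ : V) (s : V → V ≃ₗ[ℝ] V) (J : Set ι) (y : V ≃ₗ[ℝ] V) : Set V :=
  {β ∈ DelJPosB α δ θ s J | y⁻¹ β ∈ DelNeg α δ θ s}

/-- `Δ^K_J(u, −) = ⟨u∘Δ^K_{J−}⟩`. -/
def DKJm (α : ι → V) (δ θ : V) (s : V → V ≃ₗ[ℝ] V) (J K : Set ι) (u : V ≃ₗ[ℝ] V) : Set V :=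
  brSet α δ θ s (⇑u '' DeloKJneg α s J K)

/-- `Δ^K_J(u, +) = ⟨u∘Δ^K_{J+}⟩`. -/
def DKJp (α : ι → V) (δ θ : V) (s : V → V ≃ₗ[ℝ] V) (J K : Set ι) (u : V ≃ₗ[ℝ] V) : Set V :=
  brSet α δ θ s (⇑u '' DeloKJpos α s J K)

/-- `B` is a convex set in `A`: `B ⊆ A` and `β, γ ∈ B`, `β + γ ∈ A` imply `β + γ ∈ B`. -/
def ConvexIn (A B : Set V) : Prop :=
  B ⊆ A ∧ ∀ x ∈ B, ∀ y ∈ B, x + y ∈ A → x + y ∈ B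

/-- `B` is a biconvex set in `A`: both `B` and `A ∖ B` are convex sets in `A`. -/
def BiconvexIn (A B : Set V) : Prop :=
  ConvexIn A B ∧ ConvexIn A (A \ B)

/-- `P ⊆ ∘Δ` is a closed set. -/
def ClosedIn (Δo P : Set V) : Prop :=
  ∀ ε ∈ P, ∀ η ∈ P, ε + η ∈ Δo → ε + η ∈ P

/-- The coroot `α_j^∨ = 2α_j/(α_j|α_j)`. -/
noncomputable def coroot (α : ι → V) (B : V →ₗ[ℝ] V →ₗ[ℝ] ℝ) (j : ι) : V :=
  (2 / B (α j) (α j)) • α j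

/-- The coroot lattice `∘Q^∨_J = ⊕_{j ∈ J} ℤ α_j^∨`. -/
def QJ (α : ι → V) (B : V →ₗ[ℝ] V →ₗ[ℝ] ℝ) (J : Set ι) : Set V :=
  {lam | ∃ c : ι → ℤ, (∀ j, j ∉ J → c j = 0) ∧ lam = ∑ j, c j • coroot α B j}

/-- `g` acts as the translation `t_λ`: `g(μ) = μ − (μ|λ)δ` for `μ` in the span of `Π`. -/
def IsTransl (α : ι → V) (δ θ : V) (B : V →ₗ[ℝ] V →ₗ[ℝ] ℝ) (lam : V)
    (g : V ≃ₗ[ℝ] V) : Prop :=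
  ∀ μ ∈ Submodule.span ℝ (Set.range (alHat α δ θ)), g μ = μ - B μ lam • δ

/-- The translation subgroup `T_J = {t_λ | λ ∈ ∘Q^∨_J}` of `W_J`. -/
def TJ (α : ι → V) (δ θ : V) (B : V →ₗ[ℝ] V →ₗ[ℝ] ℝ) (s : V → V ≃ₗ[ℝ] V)
    (J : Set ι) : Set (V ≃ₗ[ℝ] V) :=
  {g | g ∈ WJ α δ s J ∧ ∃ lam ∈ QJ α B J, IsTransl α δ θ B lam g}

/-- The hypotheses describing the root datum of an untwisted affine Kac–Moody Lie algebra
over `ℝ`: `α` are the simple roots of the underlying finite-dimensional simple Lie algebra,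
`δ` is the null root, `θ` the highest root of `∘Δ`, `B` the standard invariant bilinear form,
and `s a` the reflection in a (real) root `a`. -/
structure AffineSetup (α : ι → V) (δ θ : V) (B : V →ₗ[ℝ] V →ₗ[ℝ] ℝ)
    (s : V → V ≃ₗ[ℝ] V) : Prop where
  indep : LinearIndependent ℝ (alHat α δ θ)
  Bsymm : ∀ u v : V, B u v = B v u
  Bpos : ∀ v ∈ Delo α s, 0 < B v v
  refl_def : ∀ a : V, B a a ≠ 0 → ∀ v : V, s a v = v - (2 * B v a / B a a) • a
  delta_orth : ∀ i : ι, B δ (α i) = 0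
  delta_null : B δ δ = 0
  theta_high : θ ∈ HighRoots α s Set.univ
  cryst : ∀ i : ι, ∀ v ∈ Delo α s, ∃ m : ℤ, s (α i) v = v - m • α i
  base : ∀ v ∈ Delo α s, Xor' (PosoComb α v) (PosoComb α (-v))
  finite : (Delo α s).Finite
  reduced : ∀ v ∈ Delo α s, (2 : ℝ) • v ∉ Delo α s
  irred : ∀ A : Set ι, (∀ i ∈ A, ∀ j ∈ Aᶜ, s (α i) (α j) = α j) → A = ∅ ∨ A = Set.univ


/-!
Every real root is `mδ + ε` with `ε ∈ ∘Δ`, uniquely, since `δ` is not in the span of `∘Π`.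
If `ε` and `-ε` both lay in `B̄`, the corresponding elements of `B` would add up to an imaginary
root, which convexity forbids, or (both at level `m = 0`) `ε` and `-ε` would both be positive.
Closedness of `B̄`, of `P_B` and of `∘Δ_J ∖ P_B` comes from adding corresponding elements of `B`
(resp. of its complement) and using (co)convexity; this needs two facts about the finite root
system: `∘Δ_J` is closed in `∘Δ` (a positive root supported on `J` lies in `∘Δ_J`, by descent on
the height), and `mδ + ε` is a positive root for all large `m`, because the highest root `θ` has
strictly positive coefficients. The latter turns "`⟨ε⟩ ∖ B` is finite" into "`mδ + ε ∈ B` for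
all large `m`".
-/

open Filter

theorem natCast_zsmul_add_add {W : Type*} [AddCommGroup W] (δ ε η : W) (k l : ℕ) :
    ((k : ℤ) • δ + ε) + ((l : ℤ) • δ + η) = ((k + l : ℕ) : ℤ) • δ + (ε + η) := by
  push_cast
  rw [add_zsmul]
  abel

section RootSystem

variable {ι V : Type*} [AddCommGroup V] [Module ℝ V]
  {α : ι → V} {δ θ : V} {Bl : V →ₗ[ℝ] V →ₗ[ℝ] ℝ} {s : V → V ≃ₗ[ℝ] V} {J : Set ι}

theorem alpha_mem_DeloJ {j : ι} (hj : j ∈ J) : α j ∈ DeloJ α s J :=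
  ⟨1, one_mem _, j, hj, rfl⟩

theorem alpha_mem_Delo (i : ι) : α i ∈ Delo α s :=
  alpha_mem_DeloJ (Set.mem_univ i)

theorem reflection_mem_WoJ {j : ι} (hj : j ∈ J) : s (α j) ∈ WoJ α s J :=
  Subgroup.subset_closure ⟨j, hj, rfl⟩

theorem WoJ_le_WoJ_univ : WoJ α s J ≤ WoJ α s Set.univ :=
  Subgroup.closure_mono (Set.image_mono (Set.subset_univ J))

theorem DeloJ_subset_Delo : DeloJ α s J ⊆ Delo α s := by
  rintro v ⟨g, hg, j, -, rfl⟩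
  exact ⟨g, WoJ_le_WoJ_univ hg, j, Set.mem_univ j, rfl⟩

theorem apply_mem_DeloJ {g : V ≃ₗ[ℝ] V} (hg : g ∈ WoJ α s J) {v : V}
    (hv : v ∈ DeloJ α s J) : g v ∈ DeloJ α s J := by
  obtain ⟨g', hg', j, hj, rfl⟩ := hv
  exact ⟨g * g', mul_mem hg hg', j, hj, rfl⟩

theorem apply_mem_Delo {g : V ≃ₗ[ℝ] V} (hg : g ∈ WoJ α s J) {v : V} (hv : v ∈ Delo α s) :
    g v ∈ Delo α s :=
  apply_mem_DeloJ (WoJ_le_WoJ_univ hg) hv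

variable [Fintype ι]

theorem posComb_add {x y : V} (hx : PosComb α δ θ x) (hy : PosComb α δ θ y) :
    PosComb α δ θ (x + y) := by
  obtain ⟨cx, hcx0, rfl⟩ := hx
  obtain ⟨cy, hcy0, rfl⟩ := hy
  exact ⟨cx + cy, fun o => add_nonneg (hcx0 o) (hcy0 o), by
    simp [add_smul, Finset.sum_add_distrib]⟩

theorem mem_DelRePos_of_posComb {v : V} (hv : v ∈ DelRe α δ s) (hpos : PosComb α δ θ v) :
    v ∈ DelRePos α δ θ s :=
  ⟨hv, Or.inl hv, hpos⟩

theorem brkt_subset_DelJPosB {ε : V} (hε : ε ∈ DeloJ α s J) :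
    brkt α δ θ s ε ⊆ DelJPosB α δ θ s J :=
  fun _ hv => Or.inl (Set.mem_biUnion hε hv)

namespace AffineSetup

theorem linearIndependent_alpha (h : AffineSetup α δ θ Bl s) : LinearIndependent ℝ α :=
  h.indep.comp some (Option.some_injective ι)

theorem coeffs_eq_of_sum_eq (h : AffineSetup α δ θ Bl s) {c d : ι → ℝ}
    (e : ∑ i, c i • α i = ∑ i, d i • α i) : c = d :=
  funext (Fintype.linearIndependent_iffₛ.mp h.linearIndependent_alpha c d e)

theorem nonneg_or_nonpos_of_mem_Delo (h : AffineSetup α δ θ Bl s) {v : V}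
    (hv : v ∈ Delo α s) {c : ι → ℝ} (hc : v = ∑ i, c i • α i) :
    (∀ i, 0 ≤ c i) ∨ ∀ i, c i ≤ 0 := by
  rcases h.base v hv with ⟨⟨d, hd, hdv⟩, -⟩ | ⟨⟨d, hd, hdv⟩, -⟩
  · exact Or.inl fun i => h.coeffs_eq_of_sum_eq (hdv.symm.trans hc) ▸ hd i
  · have hneg : -v = ∑ i, (-c i) • α i := by simp [hc]
    exact Or.inr fun i => by
      have := congrFun (h.coeffs_eq_of_sum_eq (hdv.symm.trans hneg)) i
      linarith [hd i]

theorem not_posoComb_and_posoComb_neg (h : AffineSetup α δ θ Bl s) {v : V}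
    (hv : v ∈ Delo α s) : ¬(PosoComb α v ∧ PosoComb α (-v)) := by
  rintro ⟨hp, hn⟩
  rcases h.base v hv with ⟨-, h'⟩ | ⟨-, h'⟩
  exacts [h' hn, h' hp]

theorem ne_zero_of_mem_Delo (h : AffineSetup α δ θ Bl s) {v : V} (hv : v ∈ Delo α s) :
    v ≠ 0 := by
  rintro rfl
  have h0 : PosoComb α (0 : V) := ⟨0, fun _ => le_rfl, by simp⟩
  exact h.not_posoComb_and_posoComb_neg hv ⟨h0, by rwa [neg_zero]⟩

theorem reflection_apply (h : AffineSetup α δ θ Bl s) {a : V} (ha : a ∈ Delo α s) (v : V) :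
    s a v = v - (2 * Bl v a / Bl a a) • a :=
  h.refl_def a (h.Bpos a ha).ne' v

theorem reflection_self (h : AffineSetup α δ θ Bl s) {a : V} (ha : a ∈ Delo α s) :
    s a a = -a := by
  have : 2 * Bl a a / Bl a a = 2 := by field_simp [(h.Bpos a ha).ne']
  rw [h.reflection_apply ha, this]
  module

theorem reflection_reflection (h : AffineSetup α δ θ Bl s) {a : V} (ha : a ∈ Delo α s)
    (v : V) : s a (s a v) = v := by
  have hne := (h.Bpos a ha).ne'
  rw [h.reflection_apply ha, h.reflection_apply ha]
  simp only [map_sub, map_smul, LinearMap.sub_apply, LinearMap.smul_apply, smul_eq_mul]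
  field_simp
  module

theorem bilin_reflection (h : AffineSetup α δ θ Bl s) {a : V} (ha : a ∈ Delo α s)
    (v w : V) : Bl (s a v) (s a w) = Bl v w := by
  have hne := (h.Bpos a ha).ne'
  rw [h.reflection_apply ha, h.reflection_apply ha]
  simp only [map_sub, map_smul, LinearMap.sub_apply, LinearMap.smul_apply, smul_eq_mul]
  rw [h.Bsymm a w]
  field_simp
  ring

theorem reflection_inv (h : AffineSetup α δ θ Bl s) {a : V} (ha : a ∈ Delo α s) :
    (s a)⁻¹ = s a :=
  inv_eq_of_mul_eq_one_right (LinearEquiv.ext (h.reflection_reflection ha))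

theorem WoJ_induction (h : AffineSetup α δ θ Bl s) {p : (V ≃ₗ[ℝ] V) → Prop} (one : p 1)
    (mul : ∀ j ∈ J, ∀ g, p g → p (s (α j) * g)) {g : V ≃ₗ[ℝ] V} (hg : g ∈ WoJ α s J) :
    p g := by
  induction hg using Subgroup.closure_induction_left with
  | one => exact one
  | mul_left _ hx _ _ hp =>
    obtain ⟨j, hj, rfl⟩ := hx
    exact mul j hj _ hp
  | inv_mul_cancel _ hx _ _ hp =>
    obtain ⟨j, hj, rfl⟩ := hx
    rw [h.reflection_inv (alpha_mem_Delo j)]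
    exact mul j hj _ hp

theorem bilin_apply_apply (h : AffineSetup α δ θ Bl s) {g : V ≃ₗ[ℝ] V} (hg : g ∈ WoJ α s J)
    (v w : V) : Bl (g v) (g w) = Bl v w := by
  refine h.WoJ_induction (p := fun g => ∀ v w, Bl (g v) (g w) = Bl v w)
    (fun _ _ => rfl) (fun j _ g ih v w => ?_) hg v w
  exact (h.bilin_reflection (alpha_mem_Delo j) _ _).trans (ih v w)

theorem exists_coeffs_of_mem_DeloJ (h : AffineSetup α δ θ Bl s) {v : V}
    (hv : v ∈ DeloJ α s J) : ∃ c : ι → ℝ, (∀ i ∉ J, c i = 0) ∧ v = ∑ i, c i • α i := by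
  classical
  obtain ⟨g, hg, j, hj, rfl⟩ := hv
  refine h.WoJ_induction (p := fun g => ∃ c : ι → ℝ, (∀ i ∉ J, c i = 0) ∧
    g (α j) = ∑ i, c i • α i) ?_ (fun k hk g ih => ?_) hg
  · refine ⟨Pi.single j 1, fun i hi => Pi.single_eq_of_ne (by rintro rfl; exact hi hj) 1, ?_⟩
    simp [Pi.single_apply]
  · obtain ⟨c, hcJ, hc⟩ := ih
    refine ⟨c - Pi.single k (2 * Bl (g (α j)) (α k) / Bl (α k) (α k)), fun i hi => ?_, ?_⟩
    · have hik : i ≠ k := by rintro rfl; exact hi hk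
      simp [hcJ i hi, Pi.single_eq_of_ne hik]
    · rw [LinearEquiv.mul_apply, h.reflection_apply (alpha_mem_Delo k), hc]
      simp [sub_smul, Finset.sum_sub_distrib, Pi.single_apply]

theorem exists_coeffs_of_mem_Delo (h : AffineSetup α δ θ Bl s) {v : V} (hv : v ∈ Delo α s) :
    ∃ c : ι → ℝ, v = ∑ i, c i • α i :=
  let ⟨c, _, hc⟩ := h.exists_coeffs_of_mem_DeloJ hv
  ⟨c, hc⟩

theorem mem_span_of_mem_Delo (h : AffineSetup α δ θ Bl s) {v : V} (hv : v ∈ Delo α s) :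
    v ∈ Submodule.span ℝ (Set.range α) := by
  obtain ⟨c, rfl⟩ := h.exists_coeffs_of_mem_Delo hv
  exact (Submodule.mem_span_range_iff_exists_fun ℝ).mpr ⟨c, rfl⟩

theorem neg_mem_DeloJ (h : AffineSetup α δ θ Bl s) {v : V} (hv : v ∈ DeloJ α s J) :
    -v ∈ DeloJ α s J := by
  obtain ⟨g, hg, j, hj, rfl⟩ := hv
  refine ⟨g * s (α j), mul_mem hg (reflection_mem_WoJ hj), j, hj, ?_⟩
  rw [LinearEquiv.mul_apply, h.reflection_self (alpha_mem_Delo j), map_neg]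

theorem neg_mem_Delo (h : AffineSetup α δ θ Bl s) {v : V} (hv : v ∈ Delo α s) :
    -v ∈ Delo α s :=
  h.neg_mem_DeloJ hv

theorem bilin_apply_eq_inv_apply (h : AffineSetup α δ θ Bl s) {g : V ≃ₗ[ℝ] V}
    (hg : g ∈ WoJ α s J) (v w : V) : Bl v (g w) = Bl (g⁻¹ v) w := by
  conv_lhs => rw [← g.apply_symm_apply v]
  exact h.bilin_apply_apply hg _ _

theorem exists_int_cartan (h : AffineSetup α δ θ Bl s) {v b : V} (hv : v ∈ Delo α s)
    (hb : b ∈ Delo α s) : ∃ m : ℤ, 2 * Bl v b / Bl b b = m := by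
  obtain ⟨g, hg, i, -, rfl⟩ := hb
  obtain ⟨m, hm⟩ := h.cryst i _ (apply_mem_DeloJ (inv_mem hg) hv)
  rw [h.reflection_apply (alpha_mem_Delo i), sub_right_inj, ← Int.cast_smul_eq_zsmul ℝ] at hm
  refine ⟨m, ?_⟩
  rw [h.bilin_apply_eq_inv_apply hg, h.bilin_apply_apply hg]
  exact smul_left_injective ℝ (h.ne_zero_of_mem_Delo (alpha_mem_Delo i)) hm

theorem reflection_mem_WoJ_univ (h : AffineSetup α δ θ Bl s) {b : V} (hb : b ∈ Delo α s) :
    s b ∈ WoJ α s Set.univ := by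
  obtain ⟨g, hg, i, -, rfl⟩ := id hb
  have hconj : s (g (α i)) = g * s (α i) * g⁻¹ := by
    ext v
    rw [LinearEquiv.mul_apply, LinearEquiv.mul_apply, h.reflection_apply hb,
      h.reflection_apply (alpha_mem_Delo i), map_sub, map_smul, h.bilin_apply_apply hg,
      h.bilin_apply_eq_inv_apply hg]
    simp
  rw [hconj]
  exact mul_mem (mul_mem hg (reflection_mem_WoJ trivial)) (inv_mem hg)

theorem reflection_apply_mem (h : AffineSetup α δ θ Bl s) {b v : V} (hb : b ∈ Delo α s)
    (hv : v ∈ Delo α s) : s b v ∈ Delo α s :=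
  apply_mem_Delo (h.reflection_mem_WoJ_univ hb) hv

theorem eq_one_of_smul_mem_Delo (h : AffineSetup α δ θ Bl s) {a : V} (ha : a ∈ Delo α s)
    {c : ℝ} (hc : 0 < c) (hca : c • a ∈ Delo α s) : c = 1 := by
  have hBa := (h.Bpos a ha).ne'
  obtain ⟨m, hm⟩ := h.exists_int_cartan hca ha
  obtain ⟨n, hn⟩ := h.exists_int_cartan ha hca
  simp only [map_smul, LinearMap.smul_apply, smul_eq_mul] at hm hn
  have hm' : (m : ℝ) = 2 * c := by rw [← hm]; field_simp
  have hn' : (n : ℝ) * c = 2 := by rw [← hn]; field_simp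
  have hmn : m * n = 4 := by
    exact_mod_cast (show (m : ℝ) * n = 4 by rw [hm']; linear_combination 2 * hn')
  have hm0 : 0 < m := by exact_mod_cast (show (0 : ℝ) < m by rw [hm']; positivity)
  have hm4 : m ≤ 4 := Int.le_of_dvd (by norm_num) ⟨n, hmn.symm⟩
  interval_cases m
  · refine absurd ?_ (h.reduced _ hca)
    rw [smul_smul, show 2 * c = 1 by push_cast at hm'; linarith, one_smul]
    exact ha
  · push_cast at hm'; linarith
  · omega
  · refine absurd ?_ (h.reduced _ ha)
    rwa [show (2 : ℝ) = c by push_cast at hm'; linarith]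

end AffineSetup

/-- The coordinates in the basis `(b, c)` of `tⁿ b` for `t = r_c r_b`, the product of the
reflections in two roots with Cartan integers `p, q`:
`t b = -b + p c`, `t c = -q b + (pq - 1) c`. -/
def pingPongCoeffs (p q : ℝ) : ℕ → ℝ × ℝ
  | 0 => (1, 0)
  | n + 1 => (-(pingPongCoeffs p q n).1 - q * (pingPongCoeffs p q n).2,
      p * (pingPongCoeffs p q n).1 + (p * q - 1) * (pingPongCoeffs p q n).2)

theorem pingPongCoeffs_snd_strictMono {p q : ℝ} (hp : 2 ≤ p) (hq : 2 ≤ q) :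
    StrictMono fun n => (pingPongCoeffs p q n).2 := by
  have key : ∀ n, 0 ≤ (pingPongCoeffs p q n).2 ∧
      (pingPongCoeffs p q n).2 < (pingPongCoeffs p q (n + 1)).2 := by
    intro n
    induction n with
    | zero => simp [pingPongCoeffs]; nlinarith
    | succ n ih =>
      obtain ⟨h0, hlt⟩ := ih
      refine ⟨h0.trans hlt.le, ?_⟩
      have hrec : (pingPongCoeffs p q (n + 2)).2 =
          (p * q - 2) * (pingPongCoeffs p q (n + 1)).2 - (pingPongCoeffs p q n).2 := by
        simp only [pingPongCoeffs]
        ring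
      rw [hrec]
      nlinarith [mul_nonneg (show 0 ≤ p * q - 4 by nlinarith) (h0.trans hlt.le)]
  exact strictMono_nat_of_lt_succ fun n => (key n).2

namespace AffineSetup

theorem not_two_le_cartan_of_linearIndependent (h : AffineSetup α δ θ Bl s) {b c : V}
    (hb : b ∈ Delo α s) (hc : c ∈ Delo α s) (hbc : LinearIndependent ℝ ![b, c]) :
    ¬(2 ≤ 2 * Bl b c / Bl c c ∧ 2 ≤ 2 * Bl c b / Bl b b) := by
  rintro ⟨hp, hq⟩
  have hBb := (h.Bpos b hb).ne'
  have hBc := (h.Bpos c hc).ne'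
  set p := 2 * Bl b c / Bl c c with hp_def
  set q := 2 * Bl c b / Bl b b with hq_def
  set t := s c * s b
  have htW : t ∈ WoJ α s Set.univ :=
    mul_mem (h.reflection_mem_WoJ_univ hc) (h.reflection_mem_WoJ_univ hb)
  have htb : t b = -b + p • c := by
    rw [LinearEquiv.mul_apply, h.reflection_self hb, map_neg, h.reflection_apply hc]
    module
  have htc : t c = (-q) • b + (p * q - 1) • c := by
    rw [LinearEquiv.mul_apply, h.reflection_apply hb, ← hq_def, h.reflection_apply hc]
    have : 2 * Bl (c - q • b) c / Bl c c = 2 - q * p := by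
      simp only [map_sub, map_smul, LinearMap.sub_apply, LinearMap.smul_apply, smul_eq_mul]
      rw [hp_def]
      field_simp
    rw [this]
    module
  let z : ℕ → V := fun n => (pingPongCoeffs p q n).1 • b + (pingPongCoeffs p q n).2 • c
  have hz_succ : ∀ n, z (n + 1) = t (z n) := by
    intro n
    simp only [z, map_add, map_smul, htb, htc, pingPongCoeffs]
    module
  have hz_mem : ∀ n, z n ∈ Delo α s := by
    intro n
    induction n with
    | zero => simpa [z, pingPongCoeffs] using hb
    | succ n ih => rw [hz_succ]; exact apply_mem_Delo htW ih
  have hz_inj : Function.Injective z := fun m n hmn =>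
    (pingPongCoeffs_snd_strictMono hp hq).injective (hbc.eq_of_pair hmn).2
  exact Set.infinite_of_injective_forall_mem hz_inj hz_mem h.finite

theorem add_eq_zero_of_not_linearIndependent (h : AffineSetup α δ θ Bl s) {b c : V}
    (hb : b ∈ Delo α s) (hc : c ∈ Delo α s) (hneg : Bl b c < 0)
    (hdep : ¬LinearIndependent ℝ ![b, -c]) : b + c = 0 := by
  rw [LinearIndependent.pair_iff' (h.ne_zero_of_mem_Delo hb)] at hdep
  obtain ⟨r, hr⟩ := not_forall_not.mp hdep
  have hr0 : 0 < r := by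
    have : Bl b c = -(r * Bl b b) := by
      rw [← neg_neg c, ← hr]
      simp
    nlinarith [h.Bpos b hb]
  rw [h.eq_one_of_smul_mem_Delo hb hr0 (hr ▸ h.neg_mem_Delo hc), one_smul] at hr
  rw [hr, neg_add_cancel]

theorem add_mem_Delo_of_bilin_neg (h : AffineSetup α δ θ Bl s) {b c : V} (hb : b ∈ Delo α s)
    (hc : c ∈ Delo α s) (hbc : b + c ≠ 0) (hneg : Bl b c < 0) : b + c ∈ Delo α s := by
  have hBb := h.Bpos b hb
  have hBc := h.Bpos c hc
  obtain ⟨m, hm⟩ := h.exists_int_cartan hb hc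
  obtain ⟨n, hn⟩ := h.exists_int_cartan hc hb
  have hm0 : m < 0 := by
    exact_mod_cast (show (m : ℝ) < 0 from hm ▸ div_neg_of_neg_of_pos (by linarith) hBc)
  have hn0 : n < 0 := by
    exact_mod_cast (show (n : ℝ) < 0 from
      hn ▸ div_neg_of_neg_of_pos (by linarith [h.Bsymm c b]) hBb)
  by_cases hm1 : m = -1
  · have := h.reflection_apply_mem hc hb
    rwa [h.reflection_apply hc, hm, hm1, Int.cast_neg, Int.cast_one, neg_one_smul,
      sub_neg_eq_add] at this
  by_cases hn1 : n = -1
  · have := h.reflection_apply_mem hb hc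
    rwa [h.reflection_apply hb, hn, hn1, Int.cast_neg, Int.cast_one, neg_one_smul,
      sub_neg_eq_add, add_comm] at this
  have hm2 : (m : ℝ) ≤ -2 := by exact_mod_cast (show m ≤ -2 by omega)
  have hn2 : (n : ℝ) ≤ -2 := by exact_mod_cast (show n ≤ -2 by omega)
  -- both Cartan integers are `≤ -2`, which the ping-pong argument rules out unless `c = -b`
  by_cases hind : LinearIndependent ℝ ![b, -c]
  · refine absurd ⟨?_, ?_⟩
      (h.not_two_le_cartan_of_linearIndependent hb (h.neg_mem_Delo hc) hind)
    · simp only [map_neg, LinearMap.neg_apply, neg_neg]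
      rw [mul_neg, neg_div, hm]
      linarith
    · simp only [map_neg, LinearMap.neg_apply]
      rw [mul_neg, neg_div, hn]
      linarith
  · exact absurd (h.add_eq_zero_of_not_linearIndependent hb hc hneg hind) hbc

theorem bilin_alpha_nonpos (h : AffineSetup α δ θ Bl s) {i j : ι} (hij : i ≠ j) :
    Bl (α i) (α j) ≤ 0 := by
  classical
  by_contra hpos
  obtain ⟨m, hm⟩ := h.exists_int_cartan (alpha_mem_Delo j) (alpha_mem_Delo i)
  have hm0 : (0 : ℝ) < m := by
    have := h.Bpos _ (alpha_mem_Delo i)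
    rw [← hm, h.Bsymm]
    have := not_le.mp hpos
    positivity
  have hv := h.reflection_apply_mem (alpha_mem_Delo i) (alpha_mem_Delo j)
  rw [h.reflection_apply (alpha_mem_Delo i), hm] at hv
  rcases h.nonneg_or_nonpos_of_mem_Delo hv (c := Pi.single j 1 - Pi.single i (m : ℝ))
    (by simp [sub_smul, Finset.sum_sub_distrib, Pi.single_apply]) with hc | hc
  · have := hc i
    simp [Pi.single_eq_of_ne hij] at this
    exact not_le.mpr (Int.cast_pos.mp hm0) this
  · have := hc j
    simp [Pi.single_eq_of_ne hij.symm] at this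
    linarith

theorem exists_pos_coeffs_theta (h : AffineSetup α δ θ Bl s) :
    ∃ t : ι → ℝ, (∀ i, 0 < t i) ∧ θ = ∑ i, t i • α i := by
  classical
  obtain ⟨hθ, ⟨t, ht0, hθt⟩, hθhigh⟩ := h.theta_high
  refine ⟨t, fun j => ?_, hθt⟩
  set A : Set ι := {i | 0 < t i}
  have horth : ∀ i ∈ A, ∀ k ∈ Aᶜ, Bl (α i) (α k) = 0 := by
    intro i hi k hk
    have htk : t k = 0 := le_antisymm (not_lt.mp hk) (ht0 k)
    have hterms : ∀ l ∈ Finset.univ, t l * Bl (α l) (α k) ≤ 0 := by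
      intro l _
      rcases eq_or_ne l k with rfl | hlk
      · simp [htk]
      · exact mul_nonpos_of_nonneg_of_nonpos (ht0 l) (h.bilin_alpha_nonpos hlk)
    have hsum : Bl θ (α k) = ∑ l, t l * Bl (α l) (α k) := by simp [hθt, map_sum]
    -- `θ + α k` is not a root, so `θ` cannot be strictly obtuse to `α k`
    have hθk : Bl θ (α k) = 0 := by
      refine le_antisymm (hsum ▸ Finset.sum_nonpos hterms) (not_lt.mp fun hlt => ?_)
      refine hθhigh k trivial (h.add_mem_Delo_of_bilin_neg hθ (alpha_mem_Delo k) (fun h0 => ?_) hlt)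
      have e : ∑ i, t i • α i = ∑ i, (-Pi.single k 1 : ι → ℝ) i • α i := by
        rw [← hθt, eq_neg_of_add_eq_zero_left h0]
        simp [Pi.single_apply]
      have := congrFun (h.coeffs_eq_of_sum_eq e) k
      simp [htk] at this
    have := (Finset.sum_eq_zero_iff_of_nonpos hterms).mp (hsum ▸ hθk) i (Finset.mem_univ i)
    exact (mul_eq_zero.mp this).resolve_left (ne_of_gt hi)
  rcases h.irred A fun i hi k hk => by
      rw [h.reflection_apply (alpha_mem_Delo i), h.Bsymm, horth i hi k hk]; simp with hA | hA
  · refine absurd ?_ (h.ne_zero_of_mem_Delo hθ)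
    rw [hθt]
    refine Finset.sum_eq_zero fun l _ => ?_
    have hl : l ∉ A := hA ▸ Set.notMem_empty l
    rw [le_antisymm (not_lt.mp hl) (ht0 l), zero_smul]
  · exact (hA ▸ Set.mem_univ j : j ∈ A)

theorem exists_coeff_pos_bilin_pos (h : AffineSetup α δ θ Bl s) {γ : V} (hγ : γ ∈ Delo α s)
    {c : ι → ℝ} (hc0 : ∀ i, 0 ≤ c i) (hγc : γ = ∑ i, c i • α i) :
    ∃ j, 0 < c j ∧ 0 < Bl γ (α j) := by
  by_contra hno
  have hterms : ∀ i ∈ Finset.univ, c i * Bl γ (α i) ≤ 0 := by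
    intro i _
    rcases (hc0 i).lt_or_eq with hci | hci
    · exact mul_nonpos_of_nonneg_of_nonpos hci.le (not_lt.mp fun hB => hno ⟨i, hci, hB⟩)
    · simp [← hci]
  have hγγ : Bl γ γ = ∑ i, c i * Bl γ (α i) := by
    nth_rewrite 2 [hγc]
    simp [map_sum]
  linarith [h.Bpos γ hγ, Finset.sum_nonpos hterms]

theorem mem_DeloJ_of_nonneg_coeffs (h : AffineSetup α δ θ Bl s) {γ : V}
    (hγ : γ ∈ Delo α s) {c : ι → ℝ} (hc0 : ∀ i, 0 ≤ c i) (hcJ : ∀ i ∉ J, c i = 0)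
    (hγc : γ = ∑ i, c i • α i) : γ ∈ DeloJ α s J := by
  classical
  subst hγc
  by_contra hγJ
  -- a counterexample whose coefficients have minimal sum
  set S : Set (ι → ℝ) := {c | (∀ i, 0 ≤ c i) ∧ (∀ i ∉ J, c i = 0) ∧
    ∑ i, c i • α i ∈ Delo α s ∧ ∑ i, c i • α i ∉ DeloJ α s J}
  have hSfin : S.Finite := (h.finite.preimage
    (h.linearIndependent_alpha.fintypeLinearCombination_injective.injOn)).subset
    fun c hc => by simpa [Fintype.linearCombination_apply] using hc.2.2.1
  obtain ⟨c, ⟨hc0, hcJ, hγ, hγJ⟩, hmin⟩ :=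
    Set.exists_min_image S (fun c => ∑ i, c i) hSfin ⟨c, hc0, hcJ, hγ, hγJ⟩
  set γ := ∑ i, c i • α i
  obtain ⟨j, hcj, hBj⟩ := h.exists_coeff_pos_bilin_pos hγ hc0 rfl
  have hj : j ∈ J := by_contra fun hj => hcj.ne' (hcJ j hj)
  obtain ⟨m, hm⟩ := h.exists_int_cartan hγ (alpha_mem_Delo j)
  have hm0 : (0 : ℝ) < m := hm ▸ div_pos (by linarith) (h.Bpos _ (alpha_mem_Delo j))
  set c' := c - Pi.single j (m : ℝ)
  have hγ' : s (α j) γ = ∑ i, c' i • α i := by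
    rw [h.reflection_apply (alpha_mem_Delo j), hm]
    simp [c', sub_smul, Finset.sum_sub_distrib, Pi.single_apply, γ]
  have hγ'D : s (α j) γ ∈ Delo α s := h.reflection_apply_mem (alpha_mem_Delo j) hγ
  rcases h.nonneg_or_nonpos_of_mem_Delo hγ'D hγ' with hc' | hc'
  · refine hγJ ?_
    rw [← h.reflection_reflection (alpha_mem_Delo j) γ]
    refine apply_mem_DeloJ (reflection_mem_WoJ hj) (by_contra fun hγ'J => ?_)
    have hlt : ∑ i, c' i < ∑ i, c i := by
      simp [c', Finset.sum_sub_distrib, hm0]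
    refine (hmin c' ⟨hc', fun i hi => ?_, hγ' ▸ hγ'D, hγ' ▸ hγ'J⟩).not_gt hlt
    have hij : i ≠ j := by rintro rfl; exact hi hj
    simp [c', hcJ i hi, Pi.single_eq_of_ne hij]
  · -- then `γ` is a positive multiple of `α j`, hence equal to it
    have hother : ∀ i ≠ j, c i = 0 := fun i hij =>
      le_antisymm (by simpa [c', Pi.single_eq_of_ne hij] using hc' i) (hc0 i)
    have hγj : γ = c j • α j :=
      Finset.sum_eq_single j (fun i _ hij => by rw [hother i hij, zero_smul]) (by simp)
    have hcj1 := h.eq_one_of_smul_mem_Delo (alpha_mem_Delo j) hcj (hγj ▸ hγ)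
    exact hγJ (by rw [hγj, hcj1, one_smul]; exact alpha_mem_DeloJ hj)

theorem add_mem_DeloJ (h : AffineSetup α δ θ Bl s) {x y : V} (hx : x ∈ DeloJ α s J)
    (hy : y ∈ DeloJ α s J) (hxy : x + y ∈ Delo α s) : x + y ∈ DeloJ α s J := by
  obtain ⟨cx, hcxJ, hcx⟩ := h.exists_coeffs_of_mem_DeloJ hx
  obtain ⟨cy, hcyJ, hcy⟩ := h.exists_coeffs_of_mem_DeloJ hy
  have hsum : x + y = ∑ i, (cx + cy) i • α i := by
    simp [hcx, hcy, add_smul, Finset.sum_add_distrib]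
  have hJ : ∀ i ∉ J, (cx + cy) i = 0 := fun i hi => by simp [hcxJ i hi, hcyJ i hi]
  rcases h.nonneg_or_nonpos_of_mem_Delo hxy hsum with hc | hc
  · exact h.mem_DeloJ_of_nonneg_coeffs hxy hc hJ hsum
  · have : -(x + y) ∈ DeloJ α s J :=
      h.mem_DeloJ_of_nonneg_coeffs (h.neg_mem_Delo hxy) (c := -(cx + cy))
        (fun i => neg_nonneg.mpr (hc i)) (fun i hi => by simp [hJ i hi])
        (by rw [hsum, ← Finset.sum_neg_distrib]; simp only [Pi.neg_apply, neg_smul])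
    simpa using h.neg_mem_DeloJ this

theorem delta_sub_theta_notMem_span (h : AffineSetup α δ θ Bl s) :
    δ - θ ∉ Submodule.span ℝ (Set.range α) := by
  have := h.indep.notMem_span_image (s := Set.range some) (x := none) (by simp)
  rwa [← Set.range_comp] at this

theorem delta_notMem_span (h : AffineSetup α δ θ Bl s) :
    δ ∉ Submodule.span ℝ (Set.range α) := fun hδ =>
  h.delta_sub_theta_notMem_span (Submodule.sub_mem _ hδ (h.mem_span_of_mem_Delo h.theta_high.1))

theorem eq_of_zsmul_delta_add_eq (h : AffineSetup α δ θ Bl s) {m n : ℤ} {x y : V}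
    (hx : x ∈ Submodule.span ℝ (Set.range α)) (hy : y ∈ Submodule.span ℝ (Set.range α))
    (e : m • δ + x = n • δ + y) : m = n ∧ x = y := by
  obtain rfl | hmn := eq_or_ne m n
  · exact ⟨rfl, add_left_cancel e⟩
  refine absurd ?_ h.delta_notMem_span
  have e' : ((m - n : ℤ) : ℝ) • δ = y - x := by
    rw [Int.cast_smul_eq_zsmul, sub_smul, sub_eq_sub_iff_add_eq_add, e, add_comm]
  rw [← Submodule.smul_mem_iff _ ((Int.cast_ne_zero (α := ℝ)).mpr (sub_ne_zero.mpr hmn)), e']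
  exact Submodule.sub_mem _ hy hx

theorem notMem_DelImPos_of_mem_DelRe (h : AffineSetup α δ θ Bl s) {v : V}
    (hv : v ∈ DelRe α δ s) : v ∉ DelImPos δ := by
  rintro ⟨k, -, rfl⟩
  obtain ⟨m, ε, hε, e⟩ := hv
  have := h.eq_of_zsmul_delta_add_eq (h.mem_span_of_mem_Delo hε) (Submodule.zero_mem _)
    (e.symm.trans (add_zero _).symm)
  exact h.ne_zero_of_mem_Delo hε this.2

theorem natCast_zsmul_delta_add_injective (h : AffineSetup α δ θ Bl s) {ε : V}
    (hε : ε ∈ Delo α s) : Function.Injective fun k : ℕ => (k : ℤ) • δ + ε := fun _ _ e =>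
  Nat.cast_injective (h.eq_of_zsmul_delta_add_eq (h.mem_span_of_mem_Delo hε)
    (h.mem_span_of_mem_Delo hε) e).1

theorem posoComb_of_posComb (h : AffineSetup α δ θ Bl s) {v : V} (hv : PosComb α δ θ v)
    (hspan : v ∈ Submodule.span ℝ (Set.range α)) : PosoComb α v := by
  obtain ⟨c, hc0, hvc⟩ := hv
  have e : v = c none • (δ - θ) + ∑ i, c (some i) • α i := by
    rw [hvc, Fintype.sum_option]
    rfl
  have hsum : ∑ i, c (some i) • α i ∈ Submodule.span ℝ (Set.range α) :=
    Submodule.sum_mem _ fun i _ => Submodule.smul_mem _ _ (Submodule.subset_span ⟨i, rfl⟩)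
  have hnone : c none = 0 := by
    by_contra hne
    refine h.delta_sub_theta_notMem_span ((Submodule.smul_mem_iff _ hne).mp ?_)
    rw [eq_sub_of_add_eq e.symm]
    exact Submodule.sub_mem _ hspan hsum
  exact ⟨fun i => c (some i), fun i => hc0 _, by rw [e, hnone, zero_smul, zero_add]⟩

theorem eventually_natCast_zsmul_delta_add_mem_DelRePos (h : AffineSetup α δ θ Bl s) {ε : V}
    (hε : ε ∈ Delo α s) : ∀ᶠ k : ℕ in atTop, (k : ℤ) • δ + ε ∈ DelRePos α δ θ s := by
  obtain ⟨t, ht0, hθt⟩ := h.exists_pos_coeffs_theta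
  obtain ⟨c, hc⟩ := h.exists_coeffs_of_mem_Delo hε
  have hev : ∀ᶠ k : ℕ in atTop, ∀ i, 0 ≤ (k : ℝ) * t i + c i := eventually_all.2 fun i =>
    ((tendsto_natCast_atTop_atTop.atTop_mul_const (ht0 i)).eventually_ge_atTop (-c i)).mono
      fun k hk => by linarith
  -- `kδ + ε = k α₀ + ∑ (k tᵢ + cᵢ) αᵢ`, as `δ = α₀ + θ`
  refine hev.mono fun k hk => mem_DelRePos_of_posComb ⟨k, ε, hε, rfl⟩
    ⟨fun o => o.elim k fun i => k * t i + c i, ?_, ?_⟩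
  · rintro (_ | i)
    exacts [Nat.cast_nonneg k, hk i]
  · rw [Fintype.sum_option]
    simp only [Option.elim, alHat, add_smul, mul_smul, Finset.sum_add_distrib, ← Finset.smul_sum,
      ← hθt, ← hc]
    rw [← Int.cast_smul_eq_zsmul ℝ, Int.cast_natCast]
    module

theorem exists_mem_brkt_of_mem_DelRe (h : AffineSetup α δ θ Bl s) {β : V}
    (hβ : β ∈ DelJPosB α δ θ s J) (hre : β ∈ DelRe α δ s) :
    ∃ ε ∈ DeloJ α s J, β ∈ brkt α δ θ s ε := by
  rcases hβ with hβ | hβ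
  · simpa only [brSet, Set.mem_iUnion₂, exists_prop] using hβ
  · exact absurd hβ (h.notMem_DelImPos_of_mem_DelRe hre)

end AffineSetup

/-- The set `B̄ = {β̄ | β ∈ B}` of the paper. -/
def barSet (α : ι → V) (δ : V) (s : V → V ≃ₗ[ℝ] V) (B : Set V) : Set V :=
  {ε | ε ∈ Delo α s ∧ ∃ m : ℤ, ∃ β ∈ B, β = m • δ + ε}

/-- The set `P_B` of the paper. -/
def cofiniteRoots (α : ι → V) (δ θ : V) (s : V → V ≃ₗ[ℝ] V) (J : Set ι) (B : Set V) : Set V :=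
  {ε ∈ DeloJ α s J | (brkt α δ θ s ε \ B).Finite}

namespace AffineSetup

variable {B : Set V}

theorem mem_barSet (h : AffineSetup α δ θ Bl s) (hB : B ⊆ DelJPosB α δ θ s J)
    (hreal : B ⊆ DelRePos α δ θ s) {ε : V} (hε : ε ∈ barSet α δ s B) :
    ε ∈ DeloJ α s J ∧ ∃ k : ℕ, (k : ℤ) • δ + ε ∈ B := by
  obtain ⟨hεD, m, β, hβ, rfl⟩ := hε
  obtain ⟨ε', hε', ⟨k, hk⟩, -⟩ := h.exists_mem_brkt_of_mem_DelRe (hB hβ) (hreal hβ).1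
  obtain ⟨-, rfl⟩ := h.eq_of_zsmul_delta_add_eq (h.mem_span_of_mem_Delo hεD)
    (h.mem_span_of_mem_Delo (DeloJ_subset_Delo hε')) hk
  exact ⟨hε', k, hk ▸ hβ⟩

theorem barSet_inter_neg_eq_empty (h : AffineSetup α δ θ Bl s)
    (hconv : ConvexIn (DelJPosB α δ θ s J) B) (hreal : B ⊆ DelRePos α δ θ s) :
    barSet α δ s B ∩ -barSet α δ s B = ∅ := by
  refine Set.eq_empty_of_forall_notMem fun ε ⟨hε, hεneg⟩ => ?_
  obtain ⟨hεJ, k, hk⟩ := h.mem_barSet hconv.1 hreal hε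
  obtain ⟨-, l, hl⟩ := h.mem_barSet hconv.1 hreal hεneg
  have hsum := natCast_zsmul_add_add δ ε (-ε) k l
  rw [add_neg_cancel, add_zero] at hsum
  rcases Nat.eq_zero_or_pos (k + l) with hkl | hkl
  · -- both `ε` and `-ε` lie in `B`, so both are positive
    obtain ⟨rfl, rfl⟩ : k = 0 ∧ l = 0 := by omega
    simp only [Nat.cast_zero, zero_smul, zero_add] at hk hl
    have hεD := DeloJ_subset_Delo hεJ
    exact h.not_posoComb_and_posoComb_neg hεD
      ⟨h.posoComb_of_posComb (hreal hk).2.2 (h.mem_span_of_mem_Delo hεD),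
        h.posoComb_of_posComb (hreal hl).2.2 (h.mem_span_of_mem_Delo (h.neg_mem_Delo hεD))⟩
  · -- otherwise the sum of the two elements of `B` is an imaginary root
    have him : _ ∈ DelImPos δ := ⟨k + l, hkl, hsum⟩
    exact h.notMem_DelImPos_of_mem_DelRe (hreal (hconv.2 _ hk _ hl (Or.inr him))).1 him

theorem closedIn_barSet (h : AffineSetup α δ θ Bl s) (hconv : ConvexIn (DelJPosB α δ θ s J) B)
    (hreal : B ⊆ DelRePos α δ θ s) : ClosedIn (Delo α s) (barSet α δ s B) := by
  intro ε hε η hη hεη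
  obtain ⟨hεJ, k, hk⟩ := h.mem_barSet hconv.1 hreal hε
  obtain ⟨hηJ, l, hl⟩ := h.mem_barSet hconv.1 hreal hη
  have hsum := natCast_zsmul_add_add δ ε η k l
  have hpos : _ ∈ DelRePos α δ θ s := mem_DelRePos_of_posComb
    (hsum ▸ ⟨_, _, hεη, rfl⟩) (posComb_add (hreal hk).2.2 (hreal hl).2.2)
  have hmem : _ ∈ DelJPosB α δ θ s J :=
    brkt_subset_DelJPosB (h.add_mem_DeloJ hεJ hηJ hεη) ⟨⟨k + l, hsum⟩, hpos⟩
  exact ⟨hεη, k + l, _, hconv.2 _ hk _ hl hmem, hsum⟩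

theorem brkt_diff_finite_iff (h : AffineSetup α δ θ Bl s) {ε : V} (hε : ε ∈ Delo α s) :
    (brkt α δ θ s ε \ B).Finite ↔ ∀ᶠ k : ℕ in atTop, (k : ℤ) • δ + ε ∈ B := by
  set f : ℕ → V := fun k => (k : ℤ) • δ + ε
  have himage : brkt α δ θ s ε \ B = f '' {k | ¬(f k ∈ DelRePos α δ θ s → f k ∈ B)} := by
    ext v
    constructor
    · rintro ⟨⟨⟨k, rfl⟩, hpos⟩, hB⟩
      exact ⟨k, fun himp => hB (himp hpos), rfl⟩
    · rintro ⟨k, hk, rfl⟩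
      exact ⟨⟨⟨k, rfl⟩, (Classical.not_imp.mp hk).1⟩, (Classical.not_imp.mp hk).2⟩
  rw [himage, Set.finite_image_iff (h.natCast_zsmul_delta_add_injective hε).injOn,
    ← eventually_cofinite, Nat.cofinite_eq_atTop]
  exact ⟨fun hev => (hev.and (h.eventually_natCast_zsmul_delta_add_mem_DelRePos hε)).mono
    fun _ hk => hk.1 hk.2, fun hev => hev.mono fun _ hk _ => hk⟩

theorem cofiniteRoots_subset_barSet (h : AffineSetup α δ θ Bl s) :
    cofiniteRoots α δ θ s J B ⊆ barSet α δ s B := by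
  rintro ε ⟨hεJ, hfin⟩
  have hεD := DeloJ_subset_Delo hεJ
  obtain ⟨k, hk⟩ := ((h.brkt_diff_finite_iff hεD).mp hfin).exists
  exact ⟨hεD, k, _, hk, rfl⟩

theorem closedIn_cofiniteRoots (h : AffineSetup α δ θ Bl s)
    (hconv : ConvexIn (DelJPosB α δ θ s J) B) :
    ClosedIn (Delo α s) (cofiniteRoots α δ θ s J B) := by
  rintro ε ⟨hεJ, hεfin⟩ η ⟨hηJ, hηfin⟩ hεη
  have hεηJ := h.add_mem_DeloJ hεJ hηJ hεη
  refine ⟨hεηJ, (h.brkt_diff_finite_iff hεη).mpr ?_⟩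
  obtain ⟨N, hN⟩ := eventually_atTop.mp
    (((h.brkt_diff_finite_iff (DeloJ_subset_Delo hεJ)).mp hεfin).and
      ((h.brkt_diff_finite_iff (DeloJ_subset_Delo hηJ)).mp hηfin))
  filter_upwards [h.eventually_natCast_zsmul_delta_add_mem_DelRePos hεη,
    eventually_ge_atTop (2 * N)] with k hpos hk
  -- split `k = N + (k - N)` with both parts `≥ N`
  have hsum := natCast_zsmul_add_add δ ε η N (k - N)
  rw [Nat.add_sub_cancel' (by omega : N ≤ k)] at hsum
  rw [← hsum] at hpos ⊢
  exact hconv.2 _ (hN N le_rfl).1 _ (hN (k - N) (by omega)).2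
    (brkt_subset_DelJPosB hεηJ ⟨⟨k, by rw [hsum]⟩, hpos⟩)

theorem closedIn_DeloJ_diff_cofiniteRoots (h : AffineSetup α δ θ Bl s)
    (hcoconv : ConvexIn (DelJPosB α δ θ s J) (DelJPosB α δ θ s J \ B)) :
    ClosedIn (Delo α s) (DeloJ α s J \ cofiniteRoots α δ θ s J B) := by
  rintro ε ⟨hεJ, hε⟩ η ⟨hηJ, hη⟩ hεη
  have hεηJ := h.add_mem_DeloJ hεJ hηJ hεη
  refine ⟨hεηJ, fun ⟨_, hfin⟩ => ?_⟩
  have hfreq : ∀ {ζ}, ζ ∈ DeloJ α s J → ζ ∉ cofiniteRoots α δ θ s J B →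
      ∃ᶠ k : ℕ in atTop, (k : ℤ) • δ + ζ ∈ brkt α δ θ s ζ ∧ (k : ℤ) • δ + ζ ∉ B := by
    intro ζ hζJ hζ
    have hζD := DeloJ_subset_Delo hζJ
    have := mt (h.brkt_diff_finite_iff hζD).mpr fun hfin => hζ ⟨hζJ, hfin⟩
    exact (not_eventually.mp this).and_eventually
      ((h.eventually_natCast_zsmul_delta_add_mem_DelRePos hζD).mono fun k hk => ⟨⟨k, rfl⟩, hk⟩)
      |>.mono fun _ hk => ⟨hk.2, hk.1⟩
  obtain ⟨n, hηn, hηnB⟩ := (hfreq hηJ hη).exists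
  -- shifting the infinitely many `kδ + ε ∉ B` by the fixed `nδ + η ∉ B` stays outside `B`
  have hshift : ∃ᶠ k : ℕ in atTop, ((k + n : ℕ) : ℤ) • δ + (ε + η) ∉ B := by
    refine (hfreq hεJ hε).mono fun k ⟨hεk, hεkB⟩ => ?_
    have hsum := natCast_zsmul_add_add δ ε η k n
    have hpos : _ ∈ DelRePos α δ θ s := mem_DelRePos_of_posComb
      (hsum ▸ ⟨_, _, hεη, rfl⟩) (posComb_add hεk.2.2.2 hηn.2.2.2)
    rw [← hsum]
    exact (hcoconv.2 _ ⟨brkt_subset_DelJPosB hεJ hεk, hεkB⟩ _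
      ⟨brkt_subset_DelJPosB hηJ hηn, hηnB⟩
      (brkt_subset_DelJPosB hεηJ ⟨⟨k + n, hsum⟩, hpos⟩)).2
  exact not_eventually.mpr ((tendsto_add_atTop_nat n).frequently hshift)
    ((h.brkt_diff_finite_iff hεη).mp hfin)

end AffineSetup

end RootSystem

theorem statement14_general (α : ι → V) (δ θ : V) (Bl : V →ₗ[ℝ] V →ₗ[ℝ] ℝ) (s : V → V ≃ₗ[ℝ] V)
    (h : AffineSetup α δ θ Bl s) (J : Set ι) (B : Set V)
    (hconv : ConvexIn (DelJPosB α δ θ s J) B) (hreal : B ⊆ DelRePos α δ θ s)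
    (Bbar PB : Set V)
    (hBbar : Bbar = {ε | ε ∈ Delo α s ∧ ∃ m : ℤ, ∃ β ∈ B, β = m • δ + ε})
    (hPB : PB = {ε ∈ DeloJ α s J | (brkt α δ θ s ε \ B).Finite}) :
    (Bbar ⊆ DeloJ α s J ∧ Bbar ∩ (-Bbar) = ∅ ∧ ClosedIn (Delo α s) Bbar) ∧
    (PB ⊆ DeloJ α s J ∧ PB ∩ (-PB) = ∅ ∧ ClosedIn (Delo α s) PB) ∧
    PB ⊆ Bbar ∧
    (ConvexIn (DelJPosB α δ θ s J) (DelJPosB α δ θ s J \ B) →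
      PB ∩ (-PB) = ∅ ∧ ClosedIn (Delo α s) PB ∧
        ClosedIn (Delo α s) (DeloJ α s J \ PB)) := by
  change Bbar = barSet α δ s B at hBbar
  change PB = cofiniteRoots α δ θ s J B at hPB
  subst hBbar hPB
  have hPBbar : cofiniteRoots α δ θ s J B ⊆ barSet α δ s B := h.cofiniteRoots_subset_barSet
  have hBbar_pointed := h.barSet_inter_neg_eq_empty hconv hreal
  have hPB_pointed : cofiniteRoots α δ θ s J B ∩ -cofiniteRoots α δ θ s J B = ∅ :=
    Set.subset_eq_empty (Set.inter_subset_inter hPBbar (Set.neg_subset_neg.mpr hPBbar))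
      hBbar_pointed
  have hPB_closed := h.closedIn_cofiniteRoots hconv
  exact ⟨⟨fun ε hε => (h.mem_barSet hconv.1 hreal hε).1, hBbar_pointed,
      h.closedIn_barSet hconv hreal⟩,
    ⟨fun ε hε => hε.1, hPB_pointed, hPB_closed⟩, hPBbar,
    fun hcoconv => ⟨hPB_pointed, hPB_closed, h.closedIn_DeloJ_diff_cofiniteRoots hcoconv⟩⟩

/-- Proposition 6.2: let `B` be a real convex set in `Δ_{J+}`, and set
`B̄ = {β̄ | β ∈ B}` and `P_B = {ε ∈ ∘Δ_J | ⟨ε⟩ ∖ B is finite}`. Then `B̄` and `P_B` are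
pointed closed subsets of `∘Δ_J` with `P_B ⊆ B̄`; moreover, if `B` is a real biconvex set
in `Δ_{J+}`, then `P_B` is a pointed biclosed set in `∘Δ_J`. -/
theorem statement14 (α : ι → V) (δ θ : V) (Bl : V →ₗ[ℝ] V →ₗ[ℝ] ℝ) (s : V → V ≃ₗ[ℝ] V)
    (h : AffineSetup α δ θ Bl s) (J : Set ι) (hJ : J.Nonempty) (B : Set V)
    (hconv : ConvexIn (DelJPosB α δ θ s J) B) (hreal : B ⊆ DelRePos α δ θ s)
    (Bbar PB : Set V)
    (hBbar : Bbar = {ε | ε ∈ Delo α s ∧ ∃ m : ℤ, ∃ β ∈ B, β = m • δ + ε})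
    (hPB : PB = {ε ∈ DeloJ α s J | (brkt α δ θ s ε \ B).Finite}) :
    (Bbar ⊆ DeloJ α s J ∧ Bbar ∩ (-Bbar) = ∅ ∧ ClosedIn (Delo α s) Bbar) ∧
    (PB ⊆ DeloJ α s J ∧ PB ∩ (-PB) = ∅ ∧ ClosedIn (Delo α s) PB) ∧
    PB ⊆ Bbar ∧
    (ConvexIn (DelJPosB α δ θ s J) (DelJPosB α δ θ s J \ B) →
      PB ∩ (-PB) = ∅ ∧ ClosedIn (Delo α s) PB ∧
        ClosedIn (Delo α s) (DeloJ α s J \ PB)) :=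
  statement14_general α δ θ Bl s h J B hconv hreal Bbar PB hBbar hPB

end
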